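/- arXiv:1705.10714 — 3 statements merged into one kernel-verified Lean document; each statement's English description precedes it below -/
import Mathlib

section
/- Let g be a metric on an open set U ⊆ ℝ⁴, let Ω : U → ℝ be smooth and strictly positive, and let φ : U → ℝ be smooth with □_g φ = F. Define the conformally rescaled metric g̃ = Ω⁻² g (so that g̃^{αβ} = Ω² g^{αβ} and |g̃| = Ω⁻⁸ |g|), set ψ = Ω φ and V = Ω³ □_g(Ω⁻¹). Then the identity □_{g̃} ψ + V ψ = Ω³ F holds pointwise on U. -/
noncomputable section

/-- Points of the coordinate chart `ℝ⁴`. -/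
abbrev Pt : Type := Fin 4 → ℝ

/-- Coordinate partial derivative `∂_α f`. -/
def pd (α : Fin 4) (f : Pt → ℝ) (x : Pt) : ℝ :=
  fderiv ℝ f x (Pi.single α (1 : ℝ))

/-- `|g| = |det (g_{αβ})|`. -/
def adet (g : Pt → Matrix (Fin 4) (Fin 4) ℝ) (x : Pt) : ℝ := |(g x).det|

/-- Inverse metric `g^{αβ}`. -/
def ginv (g : Pt → Matrix (Fin 4) (Fin 4) ℝ) (x : Pt) : Matrix (Fin 4) (Fin 4) ℝ := (g x)⁻¹

/-- The wave operator `□_g φ = |g|^{-1/2} ∂_α(|g|^{1/2} g^{αβ} ∂_β φ)`. -/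
def boxg (g : Pt → Matrix (Fin 4) (Fin 4) ℝ) (φ : Pt → ℝ) (x : Pt) : ℝ :=
  (Real.sqrt (adet g x))⁻¹ *
    ∑ α : Fin 4, pd α (fun y => Real.sqrt (adet g y) * ∑ β : Fin 4, ginv g y α β * pd β φ y) x

/-- A smooth symmetric everywhere-nondegenerate metric on `U`. -/
structure IsMetricOn (g : Pt → Matrix (Fin 4) (Fin 4) ℝ) (U : Set Pt) : Prop where
  smooth : ∀ α β : Fin 4, ContDiffOn ℝ (⊤ : ℕ∞) (fun x => g x α β) U
  symm : ∀ x ∈ U, ∀ α β : Fin 4, g x α β = g x β α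
  det_ne : ∀ x ∈ U, (g x).det ≠ 0

/-!
With `g̃ = Ω⁻² g` one has `√|g̃| g̃^{αβ} = Ω⁻² √|g| g^{αβ}`, so the flux of `ψ = Ω φ` for `g̃` is
`Ω⁻¹ J(φ) - φ J(Ω⁻¹)`, where `J(χ)^α = √|g| g^{αβ} ∂_β χ` is the flux for `g`. In its divergence
the cross terms `J(φ)^α ∂_α(Ω⁻¹)` and `J(Ω⁻¹)^α ∂_α φ` agree by the symmetry of `g^{αβ}` and
cancel, which leaves `□_{g̃} ψ = Ω³ □_g φ - Ω⁴ φ □_g(Ω⁻¹)`.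
-/

theorem Matrix.smul_inv₀ {n : Type*} [Fintype n] [DecidableEq n] {K : Type*} [Field K]
    (c : K) (A : Matrix n n K) : (c • A)⁻¹ = c⁻¹ • A⁻¹ := by
  rcases eq_or_ne c 0 with rfl | hc
  · simp
  by_cases hA : IsUnit A.det
  · exact Matrix.inv_smul' A (Units.mk0 c hc) hA
  · have hcA : ¬IsUnit (c • A).det := by
      rwa [Matrix.det_smul, IsUnit.mul_iff, not_and_or, or_iff_right (by simp [hc])]
    rw [Matrix.nonsing_inv_apply_not_isUnit _ hA, Matrix.nonsing_inv_apply_not_isUnit _ hcA,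
      smul_zero]

section Differentiability

variable {E : Type*} [NormedAddCommGroup E] [NormedSpace ℝ E] {x : E}
  {n : Type*} [Fintype n] [DecidableEq n] {M : E → Matrix n n ℝ}

theorem differentiableAt_det (hM : ∀ i j, DifferentiableAt ℝ (fun y => M y i j) x) :
    DifferentiableAt ℝ (fun y => (M y).det) x := by
  simp only [Matrix.det_apply']
  exact DifferentiableAt.fun_sum fun σ _ =>
    (differentiableAt_const _).mul
      (HasFDerivAt.finsetProd fun i _ => (hM (σ i) i).hasFDerivAt).differentiableAt

theorem differentiableAt_inv_apply (hM : ∀ i j, DifferentiableAt ℝ (fun y => M y i j) x)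
    (hdet : (M x).det ≠ 0) (i j : n) : DifferentiableAt ℝ (fun y => (M y)⁻¹ i j) x := by
  simp only [Matrix.inv_def, Matrix.smul_apply, Matrix.adjugate_apply, Ring.inverse_eq_inv',
    smul_eq_mul]
  refine ((differentiableAt_det hM).inv hdet).mul (differentiableAt_det fun k l => ?_)
  by_cases hk : k = j
  · simp [Matrix.updateRow_apply, hk]
  · simpa [Matrix.updateRow_apply, hk] using hM k l

end Differentiability

section PartialDerivatives

variable {f h : Pt → ℝ} {x : Pt} {α : Fin 4}

theorem Filter.EventuallyEq.pd_eq {f' : Pt → ℝ} (heq : f =ᶠ[nhds x] f') :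
    pd α f x = pd α f' x := by
  rw [pd, pd, heq.fderiv_eq]

theorem pd_mul (hf : DifferentiableAt ℝ f x) (hh : DifferentiableAt ℝ h x) :
    pd α (fun y => f y * h y) x = f x * pd α h x + h x * pd α f x := by
  simp [pd, fderiv_fun_mul hf hh]

theorem pd_sub (hf : DifferentiableAt ℝ f x) (hh : DifferentiableAt ℝ h x) :
    pd α (fun y => f y - h y) x = pd α f x - pd α h x := by
  simp [pd, fderiv_fun_sub hf hh]

theorem pd_inv (hf : DifferentiableAt ℝ f x) (hne : f x ≠ 0) :
    pd α (fun y => (f y)⁻¹) x = -((f x) ^ 2)⁻¹ * pd α f x := by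
  have h : HasFDerivAt (fun y => (f y)⁻¹) ((-(f x ^ 2)⁻¹) • fderiv ℝ f x) x :=
    (hasDerivAt_inv hne).comp_hasFDerivAt x hf.hasFDerivAt
  simp [pd, h.fderiv]

theorem ContDiffAt.differentiableAt_pd (hf : ContDiffAt ℝ 2 f x) (β : Fin 4) :
    DifferentiableAt ℝ (pd β f) x :=
  ((hf.fderiv_right (m := 1) le_rfl).clm_apply contDiffAt_const).differentiableAt one_ne_zero

end PartialDerivatives

section Metric

variable {g : Pt → Matrix (Fin 4) (Fin 4) ℝ} {x : Pt}

theorem sqrt_adet_smul (c : Pt → ℝ) :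
    √(adet (fun y => c y • g y) x) = c x ^ 2 * √(adet g x) := by
  have h : adet (fun y => c y • g y) x = (c x ^ 2) ^ 2 * adet g x := by
    rw [adet, adet, Matrix.det_smul, abs_mul, Fintype.card_fin, ← pow_mul,
      abs_of_nonneg (by positivity)]
  rw [h, Real.sqrt_mul (by positivity), Real.sqrt_sq (by positivity)]

theorem ginv_smul (c : Pt → ℝ) : ginv (fun y => c y • g y) x = (c x)⁻¹ • ginv g x :=
  Matrix.smul_inv₀ _ _

theorem ginv_isSymm (hsymm : (g x).IsSymm) : (ginv g x).IsSymm := hsymm.inv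

theorem differentiableAt_sqrt_adet (hg : ∀ α β, DifferentiableAt ℝ (fun y => g y α β) x)
    (hdet : (g x).det ≠ 0) : DifferentiableAt ℝ (fun y => √(adet g y)) x :=
  ((differentiableAt_det hg).abs hdet).sqrt (abs_ne_zero.mpr hdet)

end Metric

def current (g : Pt → Matrix (Fin 4) (Fin 4) ℝ) (φ : Pt → ℝ) (α : Fin 4) (y : Pt) : ℝ :=
  √(adet g y) * ∑ β : Fin 4, ginv g y α β * pd β φ y

section Current

variable {g : Pt → Matrix (Fin 4) (Fin 4) ℝ} {φ χ Ω : Pt → ℝ} {x : Pt}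

theorem boxg_eq_current (g : Pt → Matrix (Fin 4) (Fin 4) ℝ) (φ : Pt → ℝ) (x : Pt) :
    boxg g φ x = (√(adet g x))⁻¹ * ∑ α : Fin 4, pd α (current g φ α) x := rfl

theorem differentiableAt_current (hg : ∀ α β, DifferentiableAt ℝ (fun y => g y α β) x)
    (hdet : (g x).det ≠ 0) (hφ : ∀ β, DifferentiableAt ℝ (pd β φ) x) (α : Fin 4) :
    DifferentiableAt ℝ (current g φ α) x :=
  (differentiableAt_sqrt_adet hg hdet).mul <| DifferentiableAt.fun_sum fun β _ =>
    (differentiableAt_inv_apply hg hdet α β).mul (hφ β)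

theorem sum_current_mul_pd_comm (hsymm : (g x).IsSymm) :
    ∑ α : Fin 4, current g φ α x * pd α χ x = ∑ α : Fin 4, current g χ α x * pd α φ x := by
  simp only [current, Finset.sum_mul, Finset.mul_sum]
  rw [Finset.sum_comm]
  refine Finset.sum_congr rfl fun α _ => Finset.sum_congr rfl fun β _ => ?_
  rw [(ginv_isSymm hsymm).apply β α]
  ring

theorem current_conformal (hΩ : DifferentiableAt ℝ Ω x) (hΩx : Ω x ≠ 0)
    (hφ : DifferentiableAt ℝ φ x) (α : Fin 4) :
    current (fun y => (Ω y ^ 2)⁻¹ • g y) (fun y => Ω y * φ y) α x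
      = (Ω x)⁻¹ * current g φ α x - φ x * current g (fun y => (Ω y)⁻¹) α x := by
  simp only [current, sqrt_adet_smul, ginv_smul, Matrix.smul_apply, smul_eq_mul, pd_mul hΩ hφ,
    pd_inv hΩ hΩx, Finset.mul_sum, ← Finset.sum_sub_distrib]
  refine Finset.sum_congr rfl fun β _ => ?_
  field_simp
  ring

end Current

theorem boxg_conformal {g : Pt → Matrix (Fin 4) (Fin 4) ℝ} {Ω φ : Pt → ℝ} {x : Pt}
    (hg : ∀ α β, DifferentiableAt ℝ (fun y => g y α β) x) (hsymm : (g x).IsSymm)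
    (hdet : (g x).det ≠ 0) (hΩ : ContDiffAt ℝ 2 Ω x) (hΩx : Ω x ≠ 0) (hφ : ContDiffAt ℝ 2 φ x) :
    boxg (fun y => (Ω y ^ 2)⁻¹ • g y) (fun y => Ω y * φ y) x
      = Ω x ^ 3 * boxg g φ x - Ω x ^ 4 * φ x * boxg g (fun y => (Ω y)⁻¹) x := by
  have hΩ' : ContDiffAt ℝ 2 (fun y => (Ω y)⁻¹) x := hΩ.inv hΩx
  have hP := differentiableAt_current hg hdet hφ.differentiableAt_pd
  have hQ := differentiableAt_current hg hdet hΩ'.differentiableAt_pd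
  have hnear : ∀ᶠ y in nhds x, DifferentiableAt ℝ Ω y ∧ Ω y ≠ 0 ∧ DifferentiableAt ℝ φ y := by
    filter_upwards [hΩ.eventually (by simp), hΩ.continuousAt.eventually_ne hΩx,
      hφ.eventually (by simp)] with y hΩy hΩy' hφy
    exact ⟨hΩy.differentiableAt two_ne_zero, hΩy', hφy.differentiableAt two_ne_zero⟩
  have hdiv (α : Fin 4) :
      pd α (current (fun y => (Ω y ^ 2)⁻¹ • g y) (fun y => Ω y * φ y) α) x
        = ((Ω x)⁻¹ * pd α (current g φ α) x + current g φ α x * pd α (fun y => (Ω y)⁻¹) x)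
          - (φ x * pd α (current g (fun y => (Ω y)⁻¹) α) x
            + current g (fun y => (Ω y)⁻¹) α x * pd α φ x) := by
    have hΩd := hΩ'.differentiableAt two_ne_zero
    have hφd := hφ.differentiableAt two_ne_zero
    rw [Filter.EventuallyEq.pd_eq
        (hnear.mono fun y hy => current_conformal (g := g) hy.1 hy.2.1 hy.2.2 α),
      pd_sub (hΩd.fun_mul (hP α)) (hφd.fun_mul (hQ α)), pd_mul hΩd (hP α), pd_mul hφd (hQ α)]
  have hs : √(adet g x) ≠ 0 := Real.sqrt_ne_zero'.mpr (abs_pos.mpr hdet)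
  rw [boxg_eq_current, boxg_eq_current, boxg_eq_current, Finset.sum_congr rfl fun α _ => hdiv α,
    Finset.sum_sub_distrib, Finset.sum_add_distrib, Finset.sum_add_distrib,
    sum_current_mul_pd_comm hsymm, sqrt_adet_smul, ← Finset.mul_sum, ← Finset.mul_sum]
  field_simp
  ring

/-- the conformal wave operator identity
`□_{g̃} ψ + V ψ = Ω³ F` with `g̃ = Ω⁻² g`, `ψ = Ω φ`, `V = Ω³ □_g (Ω⁻¹)`. -/
theorem conformal_wave_identity
    (U : Set Pt) (hU : IsOpen U)
    (g : Pt → Matrix (Fin 4) (Fin 4) ℝ) (hg : IsMetricOn g U)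
    (Ω φ F : Pt → ℝ)
    (hΩ : ContDiffOn ℝ (⊤ : ℕ∞) Ω U) (hΩpos : ∀ x ∈ U, 0 < Ω x)
    (hφ : ContDiffOn ℝ (⊤ : ℕ∞) φ U)
    (hF : ∀ x ∈ U, boxg g φ x = F x) :
    ∀ x ∈ U,
      boxg (fun y => ((Ω y) ^ 2)⁻¹ • g y) (fun y => Ω y * φ y) x
          + ((Ω x) ^ 3 * boxg g (fun y => (Ω y)⁻¹) x) * (Ω x * φ x)
        = (Ω x) ^ 3 * F x := by
  intro x hx
  have hC2 {f : Pt → ℝ} (hf : ContDiffOn ℝ (⊤ : ℕ∞) f U) : ContDiffAt ℝ 2 f x :=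
    (hf.contDiffAt (hU.mem_nhds hx)).of_le (WithTop.coe_le_coe.mpr le_top)
  have hgx (α β : Fin 4) : DifferentiableAt ℝ (fun y => g y α β) x :=
    (hC2 (hg.smooth α β)).differentiableAt two_ne_zero
  rw [boxg_conformal hgx (.ext fun α β => hg.symm x hx β α) (hg.det_ne x hx) (hC2 hΩ)
    (hΩpos x hx).ne' (hC2 hφ), hF x hx]
  ring
end
end

section
/- Let C₀ ≥ 1, T ≥ 1, R ≥ 1, and let u : [0,T]×ℝ³ → ℝ be C¹ with C₀⁻¹ ≤ ∂_t u ≤ C₀ everywhere and ⟨u(t,x)⟩ ≤ C₀ T for all (t,x) ∈ [T/2,T]×{R/2<|x|<R} (this encodes the regime R ≲ T, since in the paper's setting u ≈ t−|x|). Write ∂_u^b φ = (∂_t u)⁻¹ ∂_t φ and ⟨u⟩ = (1+u²)^{1/2}. Then there is a constant C = C(C₀) such that for every smooth φ : [0,T]×ℝ³ → ℝ one has the weighted trace inequality ∫_{R/2<|x|<R} ⟨u(T,x)⟩ φ(T,x)² dx ≤ C ∫_{T/2}^{T} ∫_{R/2<|x|<R} ( ⟨u⟩² (∂_u^b φ)²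 + φ² ) dx dt. -/
/-!
Fix `x` and put `g(t) = ⟨u(t,x)⟩ φ(t,x)²`. By the fundamental theorem of calculus `g(T)` is at
most the mean of `g` over `[T/2, T]` plus `∫ |∂ₜg|`. The mean carries the factor `2/T`, which
`⟨u⟩ ≤ C₀T` absorbs into `∫ φ²`; and `∂ₜg = (u ∂ₜu/⟨u⟩) φ² + 2⟨u⟩ φ ∂ₜφ`, where
`|u ∂ₜu/⟨u⟩| ≤ C₀` and, writing `∂ₜφ = ∂ₜu · ∂_u^b φ`, the second term is at most
`C₀²⟨u⟩²(∂_u^b φ)² + φ²` by AM-GM. Integrating over the annulus and applying Fubini gives the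
inequality with `C = 4C₀²`.
-/

noncomputable section

open MeasureTheory

/-- Euclidean `ℝ³`. -/
abbrev E3 : Type := EuclideanSpace ℝ (Fin 3)

/-- The Japanese bracket `⟨x⟩ = (1+|x|²)^{1/2}`. -/
def jap (x : E3) : ℝ := Real.sqrt (1 + ‖x‖ ^ 2)

/-- The dyadic annulus `A_j = {2^j ≤ ⟨x⟩ < 2^{j+1}}`. -/
def Aj (j : ℕ) : Set E3 := {x | (2 : ℝ) ^ j ≤ jap x ∧ jap x < (2 : ℝ) ^ (j + 1)}

/-- The `L²` norm of `f` over the region `Q`. -/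
def L2n (Q : Set E3) (f : E3 → ℝ) : ℝ := Real.sqrt (∫ x in Q, (f x) ^ 2)

/-- `K` is a (smoothly bounded) domain: it is the sublevel set of a smooth
function whose differential does not vanish on the boundary. -/
def HasSmoothBoundary (K : Set E3) : Prop :=
  ∃ f : E3 → ℝ, ContDiff ℝ (⊤ : ℕ∞) f ∧ K = {x | f x ≤ 0} ∧
    ∀ x ∈ frontier K, fderiv ℝ f x ≠ 0

/-- `⟨s⟩ = (1+s²)^{1/2}` for a real number `s`. -/
def japR (s : ℝ) : ℝ := Real.sqrt (1 + s ^ 2)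

/-- `∂_t u` at the spacetime point `(t,x)`. -/
def dtAt (u : ℝ × E3 → ℝ) (t : ℝ) (x : E3) : ℝ := deriv (fun s => u (s, x)) t

open Set

lemma one_le_japR (s : ℝ) : 1 ≤ japR s :=
  Real.one_le_sqrt.mpr (by nlinarith [sq_nonneg s])

lemma japR_pos (s : ℝ) : 0 < japR s := one_pos.trans_le (one_le_japR s)

lemma abs_le_japR (s : ℝ) : |s| ≤ japR s := by
  rw [japR, ← Real.sqrt_sq_eq_abs]
  exact Real.sqrt_le_sqrt (by linarith)

@[fun_prop]
lemma continuous_japR : Continuous japR := by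
  unfold japR
  fun_prop

lemma hasDerivAt_japR (s : ℝ) : HasDerivAt japR (s / japR s) s := by
  unfold japR
  convert ((hasDerivAt_pow 2 s).const_add 1).sqrt (by positivity) using 1
  field_simp
  ring

theorem ContDiff.continuous_deriv_fst {E F : Type*} [NormedAddCommGroup E] [NormedSpace ℝ E]
    [NormedAddCommGroup F] [NormedSpace ℝ F] {f : ℝ × E → F} (hf : ContDiff ℝ 1 f) :
    Continuous fun p : ℝ × E => deriv (fun s => f (s, p.2)) p.1 := by
  have h : ∀ p : ℝ × E, deriv (fun s => f (s, p.2)) p.1 = fderiv ℝ f p (1, 0) := fun p =>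
    ((hf.differentiable one_ne_zero p).hasFDerivAt.comp_hasDerivAt p.1
      ((hasDerivAt_id p.1).prodMk (hasDerivAt_const p.1 p.2))).deriv
  simp_rw [h]
  exact (hf.continuous_fderiv one_ne_zero).clm_apply continuous_const

theorem le_inv_mul_integral_add_integral_abs_deriv {f f' : ℝ → ℝ} {a b : ℝ} (hab : a < b)
    (hf : ∀ t ∈ Icc a b, HasDerivAt f (f' t) t) (hf' : IntervalIntegrable f' volume a b) :
    f b ≤ (b - a)⁻¹ * (∫ t in a..b, f t) + ∫ t in a..b, |f' t| := by
  set V := ∫ t in a..b, |f' t|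
  have hf'_sub : ∀ s ∈ Icc a b, IntervalIntegrable f' volume s b := fun s hs =>
    hf'.mono_set (uIcc_subset_uIcc_right (mem_uIcc_of_le hs.1 hs.2))
  have h_pt : ∀ s ∈ Icc a b, f b ≤ f s + V := by
    intro s hs
    have hftc : ∫ t in s..b, f' t = f b - f s :=
      intervalIntegral.integral_eq_sub_of_hasDerivAt
        (fun t ht => hf t (uIcc_subset_Icc ⟨hs.1, hs.2⟩ ⟨hab.le, le_rfl⟩ ht)) (hf'_sub s hs)
    have h_abs : ∫ t in s..b, f' t ≤ ∫ t in s..b, |f' t| :=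
      intervalIntegral.integral_mono_on hs.2 (hf'_sub s hs) (hf'_sub s hs).abs
        fun t _ => le_abs_self _
    have h_mono : ∫ t in s..b, |f' t| ≤ V :=
      intervalIntegral.integral_mono_interval hs.1 hs.2 le_rfl
        (ae_of_all _ fun _ => abs_nonneg _) hf'.abs
    linarith
  have hfi : IntervalIntegrable f volume a b :=
    (HasDerivAt.continuousOn hf).intervalIntegrable_of_Icc hab.le
  have h_int := intervalIntegral.integral_mono_on hab.le intervalIntegrable_const
    (hfi.add intervalIntegrable_const) h_pt
  rw [intervalIntegral.integral_const, intervalIntegral.integral_add hfi intervalIntegrable_const,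
    intervalIntegral.integral_const, smul_eq_mul, smul_eq_mul] at h_int
  rw [inv_mul_eq_div, ← sub_le_iff_le_add, le_div_iff₀ (sub_pos.2 hab)]
  linarith

/-- With `U = u`, `A = ∂ₜu`, `P = φ`, `P' = ∂ₜφ`, the left side is
`2/T · ⟨u⟩φ² + |∂ₜ(⟨u⟩φ²)|`, and `A⁻¹ P'` is `∂_u^b φ`. -/
theorem trace_integrand_le {C₀ T U A P P' : ℝ} (hC₀ : 1 ≤ C₀) (hT : 0 < T)
    (hA₁ : C₀⁻¹ ≤ A) (hA₂ : A ≤ C₀) (hUT : japR U ≤ C₀ * T) :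
    2 / T * (japR U * P ^ 2) + |U * A / japR U * P ^ 2 + japR U * (2 * P * P')|
      ≤ 4 * C₀ ^ 2 * (japR U ^ 2 * (A⁻¹ * P') ^ 2 + P ^ 2) := by
  set J := japR U
  have hJ : 0 < J := japR_pos U
  have hA : 0 < A := (inv_pos.2 (one_pos.trans_le hC₀)).trans_le hA₁
  have h_mean : 2 / T * (J * P ^ 2) ≤ 2 * C₀ * P ^ 2 := by
    rw [div_mul_eq_mul_div, div_le_iff₀ hT]
    nlinarith [sq_nonneg P]
  have h_japR : |U * A / J| ≤ C₀ := by
    rw [abs_div, abs_mul, abs_of_pos hA, abs_of_pos hJ, div_le_iff₀ hJ, mul_comm C₀]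
    exact mul_le_mul (abs_le_japR U) hA₂ hA.le hJ.le
  have h_amgm : |J * (2 * P * P')| ≤ J ^ 2 * P' ^ 2 + P ^ 2 :=
    abs_le.mpr ⟨by nlinarith [sq_nonneg (J * P' + P)], by nlinarith [sq_nonneg (J * P' - P)]⟩
  have h_deriv : J ^ 2 * P' ^ 2 ≤ C₀ ^ 2 * (J ^ 2 * (A⁻¹ * P') ^ 2) := by
    have hP' : J ^ 2 * P' ^ 2 = A ^ 2 * (J ^ 2 * (A⁻¹ * P') ^ 2) := by field_simp
    rw [hP']
    gcongr
  calc 2 / T * (J * P ^ 2) + |U * A / J * P ^ 2 + J * (2 * P * P')|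
      ≤ 2 * C₀ * P ^ 2 + (|U * A / J| * P ^ 2 + |J * (2 * P * P')|) := by
        gcongr
        exact (abs_add_le _ _).trans_eq (by rw [abs_mul, abs_pow, sq_abs])
    _ ≤ 2 * C₀ * P ^ 2 + (C₀ * P ^ 2 + (C₀ ^ 2 * (J ^ 2 * (A⁻¹ * P') ^ 2) + P ^ 2)) := by
        gcongr
        exact h_amgm.trans (by linarith)
    _ ≤ 4 * C₀ ^ 2 * (J ^ 2 * (A⁻¹ * P') ^ 2 + P ^ 2) := by
        have hC : 3 * C₀ + 1 ≤ 4 * C₀ ^ 2 := by nlinarith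
        nlinarith [mul_le_mul_of_nonneg_right hC (sq_nonneg P),
          mul_nonneg (sq_nonneg C₀) (mul_nonneg (sq_nonneg J) (sq_nonneg (A⁻¹ * P')))]

theorem japR_mul_sq_le_integral {C₀ T : ℝ} {u φ : ℝ → ℝ} (hC₀ : 1 ≤ C₀) (hT : 0 < T)
    (hu : ContDiff ℝ 1 u) (hφ : ContDiff ℝ 1 φ)
    (hu' : ∀ t ∈ Icc (T / 2) T, C₀⁻¹ ≤ deriv u t ∧ deriv u t ≤ C₀)
    (huT : ∀ t ∈ Icc (T / 2) T, japR (u t) ≤ C₀ * T) :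
    japR (u T) * φ T ^ 2 ≤ 4 * C₀ ^ 2 *
      ∫ t in (T / 2)..T, (japR (u t) ^ 2 * ((deriv u t)⁻¹ * deriv φ t) ^ 2 + φ t ^ 2) := by
  set g' : ℝ → ℝ := fun t =>
    u t * deriv u t / japR (u t) * φ t ^ 2 + japR (u t) * (2 * φ t * deriv φ t)
  have hg : ∀ t, HasDerivAt (fun t => japR (u t) * φ t ^ 2) (g' t) t := fun t => by
    refine (((hasDerivAt_japR (u t)).comp t (hu.differentiable one_ne_zero t).hasDerivAt).mul
      ((hφ.differentiable one_ne_zero t).hasDerivAt.pow 2)).congr_deriv ?_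
    simp only [g', Function.comp_apply, Pi.pow_apply]
    ring
  have hu_c := hu.continuous
  have hφ_c := hφ.continuous
  have hu'_c := hu.continuous_deriv le_rfl
  have hφ'_c := hφ.continuous_deriv le_rfl
  have hg'_c : Continuous g' := by
    fun_prop (disch := exact fun t => (japR_pos _).ne')
  have hT2 : T / 2 < T := by linarith
  have hu'_ne : ∀ t ∈ Icc (T / 2) T, deriv u t ≠ 0 := fun t ht =>
    ((inv_pos.2 (one_pos.trans_le hC₀)).trans_le (hu' t ht).1).ne'
  have hW_c : ContinuousOn
      (fun t => 4 * C₀ ^ 2 * (japR (u t) ^ 2 * ((deriv u t)⁻¹ * deriv φ t) ^ 2 + φ t ^ 2))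
      (Icc (T / 2) T) := by
    fun_prop (disch := assumption)
  rw [← intervalIntegral.integral_const_mul]
  calc japR (u T) * φ T ^ 2
      ≤ (T - T / 2)⁻¹ * (∫ t in (T / 2)..T, japR (u t) * φ t ^ 2)
          + ∫ t in (T / 2)..T, |g' t| :=
        le_inv_mul_integral_add_integral_abs_deriv hT2 (fun t _ => hg t)
          (hg'_c.intervalIntegrable _ _)
    _ = ∫ t in (T / 2)..T, (2 / T * (japR (u t) * φ t ^ 2) + |g' t|) := by
        rw [intervalIntegral.integral_add ((by fun_prop : Continuous _).intervalIntegrable _ _)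
            (hg'_c.abs.intervalIntegrable _ _),
          intervalIntegral.integral_const_mul]
        congr 2
        field_simp
        ring
    _ ≤ _ := intervalIntegral.integral_mono_on hT2.le
        ((by fun_prop : Continuous _).intervalIntegrable _ _)
        (hW_c.intervalIntegrable_of_Icc hT2.le) fun t ht =>
          trace_integrand_le hC₀ hT (hu' t ht).1 (hu' t ht).2 (huT t ht)

theorem continuousOn_trace_integrand {E : Type*} [NormedAddCommGroup E] [NormedSpace ℝ E]
    {u φ : ℝ × E → ℝ} {s : Set (ℝ × E)} (hu : ContDiff ℝ 1 u) (hφ : ContDiff ℝ 1 φ)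
    (hu' : ∀ p ∈ s, deriv (fun t => u (t, p.2)) p.1 ≠ 0) :
    ContinuousOn (fun p : ℝ × E => japR (u p) ^ 2 *
      ((deriv (fun t => u (t, p.2)) p.1)⁻¹ * deriv (fun t => φ (t, p.2)) p.1) ^ 2 + φ p ^ 2) s := by
  have hu_c := hu.continuous
  have hφ_c := hφ.continuous
  have hu'_c := hu.continuous_deriv_fst.continuousOn (s := s)
  have hφ'_c := hφ.continuous_deriv_fst.continuousOn (s := s)
  fun_prop (disch := exact hu')

theorem setIntegral_le_intervalIntegral_setIntegral {E : Type*} [TopologicalSpace E]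
    [T2Space E] [SecondCountableTopology E] [MeasurableSpace E] [BorelSpace E] {μ : Measure E}
    [IsFiniteMeasureOnCompacts μ] [SFinite μ] {f : E → ℝ} {F : ℝ → E → ℝ} {a b : ℝ}
    {S K : Set E} (hab : a ≤ b) (hS : MeasurableSet S) (hK : IsCompact K) (hSK : S ⊆ K)
    (hf : ContinuousOn f K) (hF : ContinuousOn (Function.uncurry F) (Icc a b ×ˢ K))
    (h : ∀ x ∈ S, f x ≤ ∫ t in a..b, F t x) :
    ∫ x in S, f x ∂μ ≤ ∫ t in a..b, ∫ x in S, F t x ∂μ := by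
  have hF_int : Integrable (Function.uncurry fun x t => F t x)
      ((μ.restrict S).prod (volume.restrict (Ioc a b))) := by
    have h_on : IntegrableOn (Function.uncurry F) (Ioc a b ×ˢ S) (volume.prod μ) :=
      (hF.integrableOn_compact (isCompact_Icc.prod hK)).mono_set
        (prod_mono Ioc_subset_Icc_self hSK)
    rw [IntegrableOn, ← Measure.prod_restrict] at h_on
    exact h_on.swap
  rw [intervalIntegral.integral_of_le hab, ← integral_integral_swap hF_int]
  refine setIntegral_mono_on ((hf.integrableOn_compact hK).mono_set hSK)
    hF_int.integral_prod_left hS fun x hx => ?_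
  simpa only [intervalIntegral.integral_of_le hab] using h x hx

/-- the weighted trace inequality
`∫_{R/2<|x|<R}⟨u(T)⟩φ(T)² dx ≤ C∫_{T/2}^T∫_{R/2<|x|<R}(⟨u⟩²(∂_u^bφ)² + φ²) dx dt`,
where `∂_u^bφ = (∂_t u)⁻¹ ∂_t φ`. -/
theorem weighted_trace_inequality
    (C₀ : ℝ) (hC₀ : 1 ≤ C₀) :
    ∃ C : ℝ, 0 < C ∧ ∀ T R : ℝ, 1 ≤ T → 1 ≤ R →
      ∀ u : ℝ × E3 → ℝ, ContDiff ℝ 1 u →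
      (∀ t : ℝ, t ∈ Set.Icc 0 T → ∀ x : E3,
        C₀⁻¹ ≤ dtAt u t x ∧ dtAt u t x ≤ C₀) →
      (∀ t : ℝ, t ∈ Set.Icc (T/2) T → ∀ x : E3, R/2 < ‖x‖ → ‖x‖ < R →
        japR (u (t, x)) ≤ C₀ * T) →
      ∀ φ : ℝ × E3 → ℝ, ContDiff ℝ (⊤ : ℕ∞) φ →
        (∫ x in {x : E3 | R/2 < ‖x‖ ∧ ‖x‖ < R}, japR (u (T, x)) * (φ (T, x)) ^ 2)
          ≤ C * ∫ t in (T/2)..T, ∫ x in {x : E3 | R/2 < ‖x‖ ∧ ‖x‖ < R},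
              ((japR (u (t, x))) ^ 2 *
                  ((dtAt u t x)⁻¹ * deriv (fun s => φ (s, x)) t) ^ 2
                + (φ (t, x)) ^ 2) := by
  refine ⟨4 * C₀ ^ 2, by positivity, fun T R hT _ u hu hu' huT φ hφ => ?_⟩
  have hT0 : 0 < T := one_pos.trans_le hT
  have hφ1 : ContDiff ℝ 1 φ := hφ.of_le (by exact_mod_cast le_top)
  have h_slice : ∀ {f : ℝ × E3 → ℝ}, ContDiff ℝ 1 f → ∀ x, ContDiff ℝ 1 fun s => f (s, x) :=
    fun hf x => hf.comp (contDiff_id.prodMk contDiff_const)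
  have hu'_on : ∀ t ∈ Icc (T / 2) T, ∀ x, C₀⁻¹ ≤ dtAt u t x ∧ dtAt u t x ≤ C₀ :=
    fun t ht => hu' t ⟨by linarith [ht.1], ht.2⟩
  have hu'_ne : ∀ p ∈ Icc (T / 2) T ×ˢ Metric.closedBall (0 : E3) R, dtAt u p.1 p.2 ≠ 0 :=
    fun p hp => ((inv_pos.2 (one_pos.trans_le hC₀)).trans_le (hu'_on p.1 hp.1 p.2).1).ne'
  have hu_c := hu.continuous
  have hφ_c := hφ1.continuous
  rw [← intervalIntegral.integral_const_mul]
  simp_rw [← integral_const_mul]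
  refine setIntegral_le_intervalIntegral_setIntegral (by linarith)
    ((isOpen_lt continuous_const continuous_norm).inter
      (isOpen_lt continuous_norm continuous_const)).measurableSet
    (isCompact_closedBall (0 : E3) R) (fun x hx => mem_closedBall_zero_iff.2 hx.2.le)
    ?_ ?_ fun x hx => ?_
  · fun_prop
  · simp only [Function.uncurry_def, dtAt, Prod.mk.eta]
    exact continuousOn_const.mul (continuousOn_trace_integrand hu hφ1 hu'_ne)
  · rw [intervalIntegral.integral_const_mul]
    exact japR_mul_sq_le_integral hC₀ hT0 (h_slice hu x) (h_slice hφ1 x)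
      (fun t ht => hu'_on t ht x) fun t ht => huT t ht x hx.1 hx.2
end
end

section
/- Let u : [0,∞)×ℝ³ → ℝ be C¹ and suppose that Σ_{j≥0} sup{ |∂_t u(t,x) − 1| + |∇_x u(t,x) + x/⟨x⟩| : t ≥ 0, 2^j ≤ ⟨x⟩ < 2^{j+1} } < ∞. Then Σ_{j≥0} sup{ (1+t+|x|)⁻¹ |u(t,x) + ⟨x⟩ − t| : t ≥ 0, 2^j ≤ ⟨x⟩ < 2^{j+1} } < ∞; that is, the normalized difference between u and the flat retarded time t − ⟨x⟩ lies in ℓ¹_r L^∞. -/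
noncomputable section

open MeasureTheory

/-!
Put `φ = u + ⟨x⟩ - t`, so that `∂ₜφ = ∂ₜu - 1` and `∇φ = ∇u + x/⟨x⟩` are bounded by `c_j` on
`A_j`. For `x ∈ A_j`, `|φ(t,x) - φ(0,x)| ≤ c_j t`, and along the ray from `0` to `x`, which
crosses `A_0, …, A_j` in turn and spends length at most `2^(k+1)` in `A_k`,
`|φ(0,x) - φ(0,0)| ≤ 2 ∑_{k ≤ j} 2^k c_k`. As `1 + t + |x| ≥ max(t, 2^j)`, the weighted defect
on `A_j` is at most `c_j + 2^(-j) (|φ(0,0)| + 2 ∑_{k ≤ j} 2^k c_k)`, and the last sum is the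
convolution of `(c_k)` with `(2^(-k))`, hence summable.
-/

open Set

section Calculus

variable {E : Type*} [NormedAddCommGroup E] [NormedSpace ℝ E]

theorem norm_sub_le_of_norm_deriv_le {f : ℝ → E} (hf : Differentiable ℝ f) {a b C : ℝ}
    (hab : a ≤ b) (bound : ∀ s ∈ Ico a b, ‖deriv f s‖ ≤ C) : ‖f b - f a‖ ≤ C * (b - a) :=
  norm_image_sub_le_of_norm_deriv_le_segment' (fun s _ => (hf s).hasDerivAt.hasDerivWithinAt)
    bound b (right_mem_Icc.2 hab)

theorem norm_sub_le_sum_of_norm_deriv_le {f : ℝ → E} (hf : Differentiable ℝ f) {r : ℕ → ℝ}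
    (hr : Monotone r) {C : ℕ → ℝ} (hC : ∀ k, 0 ≤ C k)
    (bound : ∀ k, ∀ s ∈ Ico (r k) (r (k + 1)), ‖deriv f s‖ ≤ C k) :
    ∀ j, ∀ s ∈ Icc (r 0) (r j),
      ‖f s - f (r 0)‖ ≤ ∑ k ∈ Finset.range j, C k * (r (k + 1) - r k)
  | 0, s, hs => by simp [le_antisymm hs.2 hs.1]
  | j + 1, s, hs => by
    rw [Finset.sum_range_succ]
    have hlast : 0 ≤ C j * (r (j + 1) - r j) := mul_nonneg (hC j) (sub_nonneg.2 (hr j.le_succ))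
    rcases le_or_gt s (r j) with hsj | hjs
    · linarith [norm_sub_le_sum_of_norm_deriv_le hf hr hC bound j s ⟨hs.1, hsj⟩]
    · have hprev :=
        norm_sub_le_sum_of_norm_deriv_le hf hr hC bound j (r j) ⟨hr j.zero_le, le_rfl⟩
      have hstep : ‖f s - f (r j)‖ ≤ C j * (s - r j) :=
        norm_sub_le_of_norm_deriv_le hf hjs.le fun y hy => bound j y ⟨hy.1, hy.2.trans_le hs.2⟩
      have hlen : C j * (s - r j) ≤ C j * (r (j + 1) - r j) :=
        mul_le_mul_of_nonneg_left (by linarith [hs.2]) (hC j)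
      calc ‖f s - f (r 0)‖ ≤ ‖f s - f (r j)‖ + ‖f (r j) - f (r 0)‖ :=
            norm_sub_le_norm_sub_add_norm_sub _ _ _
        _ ≤ _ := by linarith

end Calculus

theorem summable_sum_range_two_pow_mul_div_two_pow {a : ℕ → ℝ} (ha : Summable a) :
    Summable fun j => (∑ k ∈ Finset.range (j + 1), 2 ^ k * a k) / 2 ^ j := by
  have hgeom : Summable fun n => ‖((2 : ℝ)⁻¹) ^ n‖ := by
    simpa using summable_geometric_two
  refine (summable_sum_mul_range_of_summable_norm' ha.norm ha hgeom hgeom.of_norm).congr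
    fun j => ?_
  rw [Finset.sum_div]
  refine Finset.sum_congr rfl fun k hk => ?_
  rw [inv_pow, pow_sub₀ _ two_ne_zero (Finset.mem_range_succ_iff.1 hk)]
  field_simp

theorem hasGradientAt_jap (x : E3) : HasGradientAt jap ((jap x)⁻¹ • x) x := by
  have h : HasFDerivAt jap _ x :=
    ((hasStrictFDerivAt_norm_sq x).hasFDerivAt.const_add 1).sqrt (by positivity)
  have hdual : InnerProductSpace.toDual ℝ E3 ((jap x)⁻¹ • x)
      = (1 / (2 * √(1 + ‖x‖ ^ 2))) • 2 • innerSL ℝ x := by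
    ext w
    simp [jap]
    ring
  rwa [hasGradientAt_iff_hasFDerivAt, hdual]

theorem jap_smul_of_norm_eq_one {e : E3} (he : ‖e‖ = 1) (s : ℝ) :
    jap (s • e) = √(1 + s ^ 2) := by
  rw [jap, norm_smul, he, mul_one, Real.norm_eq_abs, sq_abs]

theorem jap_zero : jap 0 = 1 := by simp [jap]

/-- The value of `‖x‖` at which `⟨x⟩ = 2 ^ k`. -/
def dyadicRadius (k : ℕ) : ℝ := √(4 ^ k - 1)

theorem dyadicRadius_zero : dyadicRadius 0 = 0 := by simp [dyadicRadius]

theorem dyadicRadius_nonneg (k : ℕ) : 0 ≤ dyadicRadius k := Real.sqrt_nonneg _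

theorem dyadicRadius_le_iff {k : ℕ} {s : ℝ} (hs : 0 ≤ s) :
    dyadicRadius k ≤ s ↔ 2 ^ k ≤ √(1 + s ^ 2) := by
  rw [dyadicRadius, Real.sqrt_le_left hs, Real.le_sqrt (by positivity) (by positivity), ← pow_mul,
    mul_comm, pow_mul]
  norm_num
  constructor <;> intro h <;> linarith

theorem lt_dyadicRadius_iff {k : ℕ} {s : ℝ} (hs : 0 ≤ s) :
    s < dyadicRadius k ↔ √(1 + s ^ 2) < 2 ^ k := by
  simpa only [not_le] using (dyadicRadius_le_iff hs).not

theorem dyadicRadius_le_two_pow (k : ℕ) : dyadicRadius k ≤ 2 ^ k := by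
  rw [dyadicRadius, Real.sqrt_le_left (by positivity), ← pow_mul, mul_comm, pow_mul]
  norm_num

theorem dyadicRadius_monotone : Monotone dyadicRadius :=
  monotone_nat_of_le_succ fun k => Real.sqrt_le_sqrt (by gcongr <;> norm_num)

theorem smul_mem_Aj_iff {e : E3} (he : ‖e‖ = 1) {s : ℝ} (hs : 0 ≤ s) {k : ℕ} :
    s • e ∈ Aj k ↔ s ∈ Ico (dyadicRadius k) (dyadicRadius (k + 1)) := by
  rw [mem_Ico, dyadicRadius_le_iff hs, lt_dyadicRadius_iff hs, ← jap_smul_of_norm_eq_one he]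
  rfl

theorem hasDerivAt_add_jap_smul {F : E3 → ℝ} (hF : Differentiable ℝ F) (e : E3) (s : ℝ) :
    HasDerivAt (fun r : ℝ => F (r • e) + jap (r • e))
      (inner ℝ (gradient F (s • e) + (jap (s • e))⁻¹ • (s • e)) e) s := by
  have hline : HasDerivAt (fun r : ℝ => r • e) e s := by
    simpa using (hasDerivAt_id s).smul_const e
  have hF' := (hF (s • e)).hasFDerivAt.comp_hasDerivAt s hline
  have hjap := (hasGradientAt_jap (s • e)).hasFDerivAt.comp_hasDerivAt s hline
  refine (hF'.add hjap).congr_deriv ?_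
  rw [inner_add_left, inner_gradient_left]
  rfl

theorem abs_add_jap_sub_le_of_gradient_le {F : E3 → ℝ} (hF : Differentiable ℝ F) {d : ℕ → ℝ}
    (hd : ∀ k, 0 ≤ d k) (hFd : ∀ k, ∀ y ∈ Aj k, ‖gradient F y + (jap y)⁻¹ • y‖ ≤ d k)
    {j : ℕ} {x : E3} (hx : x ∈ Aj j) :
    |F x + jap x - (F 0 + 1)| ≤ 2 * ∑ k ∈ Finset.range (j + 1), 2 ^ k * d k := by
  have hsum : 0 ≤ 2 * ∑ k ∈ Finset.range (j + 1), 2 ^ k * d k :=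
    mul_nonneg zero_le_two (Finset.sum_nonneg fun k _ => mul_nonneg (by positivity) (hd k))
  rcases eq_or_ne x 0 with rfl | hx0
  · simpa [jap_zero] using hsum
  set e : E3 := ‖x‖⁻¹ • x
  have he : ‖e‖ = 1 := norm_smul_inv_norm hx0
  have hxe : ‖x‖ • e = x := by
    rw [smul_smul, mul_inv_cancel₀ (norm_ne_zero_iff.2 hx0), one_smul]
  set g : ℝ → ℝ := fun r => F (r • e) + jap (r • e)
  have hg : Differentiable ℝ g := fun s => (hasDerivAt_add_jap_smul hF e s).differentiableAt
  have hg' : ∀ k, ∀ s ∈ Ico (dyadicRadius k) (dyadicRadius (k + 1)), ‖deriv g s‖ ≤ d k := by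
    intro k s hs
    have hs0 : 0 ≤ s := (dyadicRadius_nonneg k).trans hs.1
    rw [(hasDerivAt_add_jap_smul hF e s).deriv, Real.norm_eq_abs]
    calc _ ≤ ‖gradient F (s • e) + (jap (s • e))⁻¹ • (s • e)‖ * ‖e‖ := abs_real_inner_le_norm _ _
      _ ≤ d k := by rw [he, mul_one]; exact hFd k _ ((smul_mem_Aj_iff he hs0).2 hs)
  have hxr : ‖x‖ ∈ Icc (dyadicRadius 0) (dyadicRadius (j + 1)) := by
    rw [← hxe, smul_mem_Aj_iff he (norm_nonneg x)] at hx
    exact ⟨dyadicRadius_zero ▸ norm_nonneg x, hx.2.le⟩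
  have key := norm_sub_le_sum_of_norm_deriv_le hg dyadicRadius_monotone hd hg' (j + 1) ‖x‖ hxr
  simp only [g, hxe, dyadicRadius_zero, zero_smul, jap_zero, Real.norm_eq_abs] at key
  rw [Finset.mul_sum]
  refine key.trans (Finset.sum_le_sum fun k _ => ?_)
  rw [← mul_assoc, ← pow_succ', mul_comm]
  gcongr
  · exact hd k
  · linarith [dyadicRadius_le_two_pow (k + 1), dyadicRadius_nonneg k]

theorem abs_add_jap_sub_le_of_deriv_gradient_le {u : ℝ × E3 → ℝ} (hu : ContDiff ℝ 1 u)
    {d : ℕ → ℝ} (hd : ∀ k, 0 ≤ d k)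
    (hud : ∀ j : ℕ, ∀ t : ℝ, 0 ≤ t → ∀ x ∈ Aj j,
      |deriv (fun s => u (s, x)) t - 1| + ‖gradient (fun y => u (t, y)) x + (jap x)⁻¹ • x‖ ≤ d j)
    {j : ℕ} {t : ℝ} (ht : 0 ≤ t) {x : E3} (hx : x ∈ Aj j) :
    |u (t, x) + jap x - t| ≤
      d j * t + (|u (0, 0) + 1| + 2 * ∑ k ∈ Finset.range (j + 1), 2 ^ k * d k) := by
  have hdiff : Differentiable ℝ u := hu.differentiable one_ne_zero
  have hut : Differentiable ℝ fun s => u (s, x) :=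
    hdiff.comp (differentiable_id.prodMk (differentiable_const x))
  have hderiv : ∀ s ∈ Ico 0 t, ‖deriv (fun s => u (s, x) - s) s‖ ≤ d j := by
    intro s hs
    rw [deriv_fun_sub (hut s) differentiableAt_fun_id, deriv_id'', Real.norm_eq_abs]
    exact le_of_add_le_of_nonneg_left (hud j s hs.1 x hx) (norm_nonneg _)
  have htime : |u (t, x) - t - u (0, x)| ≤ d j * t := by
    simpa using norm_sub_le_of_norm_deriv_le (hut.sub differentiable_id) ht hderiv
  have hspace :
      |u (0, x) + jap x - (u (0, 0) + 1)| ≤ 2 * ∑ k ∈ Finset.range (j + 1), 2 ^ k * d k :=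
    abs_add_jap_sub_le_of_gradient_le
      (hdiff.comp ((differentiable_const 0).prodMk differentiable_id)) hd
      (fun k y hy => le_of_add_le_of_nonneg_right (hud k 0 le_rfl y hy) (abs_nonneg _)) hx
  calc |u (t, x) + jap x - t|
      = |(u (t, x) - t - u (0, x)) + (u (0, x) + jap x - (u (0, 0) + 1)) + (u (0, 0) + 1)| := by
        congr 1; ring
    _ ≤ |u (t, x) - t - u (0, x)| + |u (0, x) + jap x - (u (0, 0) + 1)| + |u (0, 0) + 1| :=
        abs_add_three _ _ _
    _ ≤ _ := by linarith

theorem two_pow_le_one_add_norm {j : ℕ} {x : E3} (hx : x ∈ Aj j) : 2 ^ j ≤ 1 + ‖x‖ :=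
  hx.1.trans (sqrt_one_add_norm_sq_le x)

theorem inv_mul_le_add_div {W t A a M D : ℝ} (ha : 0 ≤ a) (hM : 0 ≤ M) (hD : 0 < D)
    (htW : t ≤ W) (hDW : D ≤ W) (hA : A ≤ a * t + M) : W⁻¹ * A ≤ a + M / D := by
  have hW : 0 < W := hD.trans_le hDW
  rw [inv_mul_le_iff₀ hW]
  have : M ≤ W * (M / D) := by
    rw [mul_div_assoc', le_div_iff₀ hD, mul_comm]; exact mul_le_mul_of_nonneg_right hDW hM
  rw [mul_add]
  linarith [mul_le_mul_of_nonneg_left htW ha]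

/-- if `∂u - (1,-x/⟨x⟩)` lies in `ℓ¹_r L^∞` (uniformly in `t ≥ 0`),
then `(1+t+|x|)⁻¹(u + ⟨x⟩ - t)` lies in `ℓ¹_r L^∞` as well. -/
theorem optical_function_flat_comparison
    (u : ℝ × E3 → ℝ) (hu : ContDiff ℝ 1 u)
    (hyp : ∃ c : ℕ → ℝ, Summable c ∧ ∀ j : ℕ, ∀ t : ℝ, 0 ≤ t → ∀ x ∈ Aj j,
      |deriv (fun s => u (s, x)) t - 1|
          + ‖gradient (fun y => u (t, y)) x + (jap x)⁻¹ • x‖ ≤ c j) :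
    ∃ c' : ℕ → ℝ, Summable c' ∧ ∀ j : ℕ, ∀ t : ℝ, 0 ≤ t → ∀ x ∈ Aj j,
      (1 + t + ‖x‖)⁻¹ * |u (t, x) + jap x - t| ≤ c' j := by
  obtain ⟨c, hc, hbd⟩ := hyp
  set B := |u (0, 0) + 1|
  refine ⟨fun j => |c j| + (B + 2 * ∑ k ∈ Finset.range (j + 1), 2 ^ k * |c k|) / 2 ^ j, ?_,
    fun j t ht x hx => ?_⟩
  · refine (hc.abs.add ((summable_geometric_two.mul_left B).add
      ((summable_sum_range_two_pow_mul_div_two_pow hc.abs).mul_left 2))).congr fun j => ?_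
    simp only [one_div, inv_pow]
    ring
  · refine inv_mul_le_add_div (abs_nonneg _) ?_ (by positivity) ?_ ?_
      (abs_add_jap_sub_le_of_deriv_gradient_le hu (fun k => abs_nonneg (c k))
        (fun j t ht x hx => (hbd j t ht x hx).trans (le_abs_self _)) ht hx)
    · positivity
    · linarith [norm_nonneg x]
    · linarith [two_pow_le_one_add_norm hx]
end
end
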